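/- arXiv:2511.21666 — 2 statements merged into one kernel-verified Lean document; each statement's English description precedes it below -/
import Mathlib

section
/- Let H be a symmetric positive definite n×n real matrix written in block form H = [[A, B], [Bᵀ, C]] with A of size k×k, and let P = [0_{(n−k)×k}, I_{n−k}] be the projection onto the last n−k coordinates. Define H_t = (P H⁻¹ Pᵀ)⁻¹. Then for any u ∈ ℝᵏ and t ∈ ℝ^{n−k}, if (u, t)ᵀ H (u, t) ≤ 1 then tᵀ H_t t ≤ 1. -/
open Matrix

/-! With `S = M H⁻¹ Mᵀ` and `v = Mᵀ S⁻¹ M z`, both `v ⬝ z` and `vᵀ H⁻¹ v` equal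
`s = (M z)ᵀ S⁻¹ (M z)`, so Cauchy–Schwarz for the form `H⁻¹`, applied to `v` and `H z`, gives
`s² ≤ s · zᵀ H z`, hence `s ≤ zᵀ H z`. The shadow of the ellipsoid is the case `M = P`,
for which `P (u, t) = t`. -/

namespace Matrix

variable {n m : Type*} [Fintype n] [Fintype m]

theorem transpose_mulVec_dotProduct {R : Type*} [CommSemiring R] (M : Matrix m n R)
    (w : m → R) (x : n → R) : (Mᵀ *ᵥ w) ⬝ᵥ x = w ⬝ᵥ (M *ᵥ x) := by
  rw [mulVec_transpose, dotProduct_mulVec]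

theorem PosSemidef.dotProduct_mulVec_sq_le [DecidableEq n] {M : Matrix n n ℝ}
    (hM : M.PosSemidef) (x y : n → ℝ) :
    (x ⬝ᵥ (M *ᵥ y)) ^ 2 ≤ (x ⬝ᵥ (M *ᵥ x)) * (y ⬝ᵥ (M *ᵥ y)) := by
  have hnonneg (x : n → ℝ) : 0 ≤ M.toBilin' x x := by
    simpa only [toBilin'_apply', star_trivial] using hM.dotProduct_mulVec_nonneg x
  have hsymm : LinearMap.IsSymm M.toBilin' := LinearMap.BilinForm.isSymm_iff.mp <|
    isSymm_toBilin'_iff_isSymm.mpr (isHermitian_iff_isSymm.mp hM.isHermitian)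
  simpa only [toBilin'_apply'] using
    LinearMap.BilinForm.apply_sq_le_of_symm M.toBilin' hnonneg hsymm x y

theorem PosDef.dotProduct_mulVec_inv_le [DecidableEq n] [DecidableEq m] {H : Matrix n n ℝ}
    (hH : H.PosDef) (M : Matrix m n ℝ) (z : n → ℝ) :
    (M *ᵥ z) ⬝ᵥ ((M * H⁻¹ * Mᵀ)⁻¹ *ᵥ (M *ᵥ z)) ≤ z ⬝ᵥ (H *ᵥ z) := by
  have hq : 0 ≤ z ⬝ᵥ (H *ᵥ z) := by simpa using hH.posSemidef.dotProduct_mulVec_nonneg z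
  by_cases hS : IsUnit (M * H⁻¹ * Mᵀ).det
  swap
  · -- a singular `S` has junk inverse `0`
    simpa [nonsing_inv_apply_not_isUnit _ hS] using hq
  set w := (M * H⁻¹ * Mᵀ)⁻¹ *ᵥ (M *ᵥ z) with hw
  set s := (M *ᵥ z) ⬝ᵥ w
  have hvz : (Mᵀ *ᵥ w) ⬝ᵥ z = s := by
    rw [transpose_mulVec_dotProduct, dotProduct_comm]
  have hSw : (M * H⁻¹ * Mᵀ) *ᵥ w = M *ᵥ z := by
    rw [hw, mulVec_mulVec, mul_nonsing_inv _ hS, one_mulVec]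
  have hvHv : (Mᵀ *ᵥ w) ⬝ᵥ (H⁻¹ *ᵥ (Mᵀ *ᵥ w)) = s := by
    rw [transpose_mulVec_dotProduct, mulVec_mulVec, mulVec_mulVec, hSw, dotProduct_comm]
  have hHz : H⁻¹ *ᵥ (H *ᵥ z) = z := by
    rw [mulVec_mulVec, nonsing_inv_mul _ ((isUnit_iff_isUnit_det H).mp hH.isUnit), one_mulVec]
  have hcs := hH.inv.posSemidef.dotProduct_mulVec_sq_le (Mᵀ *ᵥ w) (H *ᵥ z)
  rw [hHz, hvz, hvHv, dotProduct_comm (H *ᵥ z)] at hcs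
  nlinarith

end Matrix

/-- Projection (shadow) of an ellipsoid: if `H ≻ 0` and
`H_t = (P H⁻¹ Pᵀ)⁻¹` where `P = [0, I]` projects onto the last coordinates,
then `(u, t)ᵀ H (u, t) ≤ 1` implies `tᵀ H_t t ≤ 1`. -/
theorem ellipsoid_projection {k m : ℕ}
    (H : Matrix (Fin k ⊕ Fin m) (Fin k ⊕ Fin m) ℝ) (hH : H.PosDef) :
    ∀ (u : Fin k → ℝ) (t : Fin m → ℝ),
      let P : Matrix (Fin m) (Fin k ⊕ Fin m) ℝ :=
        Matrix.of fun i j => if j = Sum.inr i then (1 : ℝ) else 0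
      let Ht : Matrix (Fin m) (Fin m) ℝ := (P * H⁻¹ * Pᵀ)⁻¹
      (Sum.elim u t) ⬝ᵥ (H *ᵥ Sum.elim u t) ≤ 1 →
        t ⬝ᵥ (Ht *ᵥ t) ≤ 1 := by
  intro u t P Ht hle
  have hP : P *ᵥ Sum.elim u t = t := by
    ext i
    simp [P, mulVec, dotProduct]
  have h := (hH.dotProduct_mulVec_inv_le P (Sum.elim u t)).trans hle
  rwa [hP] at h
end

section
/- Let q be a unit quaternion representing the rotation R ∈ SO(3), i.e., for all y ∈ ℝ³, q ∘ (0, y) ∘ q⁻¹ = (0, R y). Then for all x, y ∈ ℝ³, xᵀ R y = − qᵀ Ω₁(x̃) Ω₂(ỹ) q, where x̃ = (0, x) and ỹ = (0, y) are the pure-imaginary quaternions and Ω₁, Ω₂ are the left/right quaternion multiplication matrices. -/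
open Matrix Quaternion

/-- The coordinate vector of a quaternion in the basis `(1, i, j, k)`. -/
noncomputable def qvec (a : Quaternion ℝ) : Fin 4 → ℝ := ![a.re, a.imI, a.imJ, a.imK]

/-- Matrix of left quaternion multiplication by `a`. -/
noncomputable def Omega1 (a : Quaternion ℝ) : Matrix (Fin 4) (Fin 4) ℝ :=
  !![a.re, -a.imI, -a.imJ, -a.imK;
     a.imI, a.re, -a.imK, a.imJ;
     a.imJ, a.imK, a.re, -a.imI;
     a.imK, -a.imJ, a.imI, a.re]

/-- Matrix of right quaternion multiplication by `a`. -/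
noncomputable def Omega2 (a : Quaternion ℝ) : Matrix (Fin 4) (Fin 4) ℝ :=
  !![a.re, -a.imI, -a.imJ, -a.imK;
     a.imI, a.re, a.imK, -a.imJ;
     a.imJ, -a.imK, a.re, a.imI;
     a.imK, a.imJ, -a.imI, a.re]

/-- The pure-imaginary quaternion with vector part `v`. -/
noncomputable def pureQuat (v : Fin 3 → ℝ) : Quaternion ℝ := ⟨0, v 0, v 1, v 2⟩

/-!
Since `Ω₁` and `Ω₂` are the matrices of left and right multiplication, the quadratic form is
`qᵀ Ω₁(x̃) Ω₂(ỹ) q = ⟪x̃ q ỹ, q⟫ = Re (x̃ q ỹ q̄)`, as `⟪a, b⟫ = Re (a b̄)`. For a unit quaternion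
`q̄ = q⁻¹`, so `q ỹ q̄ = (0, R y)`, and the real part of a product of two pure quaternions is
minus the dot product of their vectors.
-/

namespace Quaternion

theorem inv_eq_star_of_norm_eq_one {q : ℍ} (hq : ‖q‖ = 1) : q⁻¹ = star q := by
  rw [inv_def, normSq_eq_norm_mul_self, hq, mul_one, inv_one, one_smul]

end Quaternion

theorem qvec_mul_eq_Omega1_mulVec (a b : ℍ) : qvec (a * b) = Omega1 a *ᵥ qvec b := by
  ext i
  fin_cases i <;>
    simp only [qvec, Omega1, mulVec, dotProduct, of_apply, Fin.sum_univ_four, re_mul, imI_mul,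
      imJ_mul, imK_mul, Fin.isValue, Fin.zero_eta, Fin.mk_one, Fin.reduceFinMk, cons_val',
      cons_val_fin_one, cons_val_zero, cons_val_one, cons_val] <;> ring

theorem qvec_mul_eq_Omega2_mulVec (a b : ℍ) : qvec (a * b) = Omega2 b *ᵥ qvec a := by
  ext i
  fin_cases i <;>
    simp only [qvec, Omega2, mulVec, dotProduct, of_apply, Fin.sum_univ_four, re_mul, imI_mul,
      imJ_mul, imK_mul, Fin.isValue, Fin.zero_eta, Fin.mk_one, Fin.reduceFinMk, cons_val',
      cons_val_fin_one, cons_val_zero, cons_val_one, cons_val] <;> ring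

theorem qvec_dotProduct_qvec (a b : ℍ) : qvec a ⬝ᵥ qvec b = (a * star b).re := by
  simp only [qvec, dotProduct, Fin.sum_univ_four, Fin.isValue, cons_val_zero, cons_val_one,
    cons_val, re_mul, re_star, imI_star, imJ_star, imK_star]
  ring

theorem re_pureQuat_mul_pureQuat (x y : Fin 3 → ℝ) :
    (pureQuat x * pureQuat y).re = -(x ⬝ᵥ y) := by
  rw [re_mul]
  simp only [pureQuat, dotProduct, Fin.sum_univ_three]
  ring

/-- If the unit quaternion `q` represents the rotation `R` (acting by
conjugation on pure quaternions), then `xᵀ R y = − qᵀ Ω₁(x̃) Ω₂(ỹ) q`. -/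
theorem bilinear_form_as_quaternion_quadratic
    (q : Quaternion ℝ) (hq : ‖q‖ = 1)
    (R : Matrix (Fin 3) (Fin 3) ℝ)
    (hrot : ∀ y : Fin 3 → ℝ, q * pureQuat y * q⁻¹ = pureQuat (R *ᵥ y)) :
    ∀ x y : Fin 3 → ℝ,
      x ⬝ᵥ (R *ᵥ y) =
        -(qvec q ⬝ᵥ ((Omega1 (pureQuat x) * Omega2 (pureQuat y)) *ᵥ qvec q)) := by
  intro x y
  have hconj : q * pureQuat y * star q = pureQuat (R *ᵥ y) := by
    rw [← inv_eq_star_of_norm_eq_one hq, hrot]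
  calc x ⬝ᵥ (R *ᵥ y)
      = -(pureQuat x * (q * pureQuat y * star q)).re := by
        rw [hconj, re_pureQuat_mul_pureQuat, neg_neg]
    _ = -(qvec (pureQuat x * q * pureQuat y) ⬝ᵥ qvec q) := by
        rw [qvec_dotProduct_qvec, mul_assoc, mul_assoc, mul_assoc]
    _ = -(qvec q ⬝ᵥ ((Omega1 (pureQuat x) * Omega2 (pureQuat y)) *ᵥ qvec q)) := by
        rw [dotProduct_comm, ← mulVec_mulVec, mul_assoc, qvec_mul_eq_Omega1_mulVec,
          qvec_mul_eq_Omega2_mulVec]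
end
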